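/- Let 0 < ε < π and let K̄_ε be the infinite-order scaled kernel. Then 0 ≤ K̄_ε(θ) ≤ 1/ε for every real θ. -/

import Mathlib

/-- The sinc function: `sinc x = sin x / x` for `x ≠ 0` and `sinc 0 = 1`. -/
noncomputable def sinc (x : ℝ) : ℝ := if x = 0 then 1 else Real.sin x / x

/-- The Fourier coefficient `c_k(ε) = ∏_{n=1}^∞ sinc(kε/2^n)` of the
infinite-order scaled kernel. -/
noncomputable def infKernelCoeff (ε : ℝ) (k : ℕ) : ℝ :=
  ∏' n : ℕ, sinc ((k : ℝ) * ε / 2 ^ (n + 1))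

/-- The infinite-order scaled kernel with range `ε`:
`K̄_ε(θ) = 1/(2π) + (1/π) Σ_{k=1}^∞ c_k(ε) cos(kθ)`. -/
noncomputable def infKernel (ε : ℝ) (θ : ℝ) : ℝ :=
  1 / (2 * Real.pi) +
    (1 / Real.pi) * ∑' k : ℕ, infKernelCoeff ε (k + 1) * Real.cos ((k + 1 : ℝ) * θ)


/-!
Averaging a cosine polynomial over `[θ - a, θ + a]` multiplies the coefficient of `cos (k t)` by
`sinc (k a)`. Averaging the Fejér kernel `F_M` successively over radii `ε/2, ε/4, …, ε/2^N`
therefore gives the cosine polynomial with coefficients `(1 - k/M) ∏_{n ≤ N} sinc (k ε / 2^n)`.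
Averages of a nonnegative function are nonnegative; the first average is at most `1/ε` because
`F_M ≥ 0` has integral `1` over a period of length `2π ≥ ε`, and later averages keep that bound.
Both bounds survive `N → ∞` (a finite sum of convergent products) and then `M → ∞`: the Fejér
means of the absolutely convergent series (`|c_k| ≤ 8/(kε)²`) converge to its sum by Cesàro.
-/

open Finset Filter Topology
open Real hiding sinc

theorem sinc_eq_real_sinc : sinc = Real.sinc := rfl

theorem abs_sinc_le_inv_abs {x : ℝ} (hx : x ≠ 0) : |sinc x| ≤ |x|⁻¹ := by
  rw [sinc_eq_real_sinc, Real.sinc_of_ne_zero hx, abs_div, div_eq_mul_inv]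
  exact mul_le_of_le_one_left (inv_nonneg.2 (abs_nonneg x)) (abs_sin_le_one x)

theorem abs_sinc_sub_one_le (x : ℝ) : |sinc x - 1| ≤ x ^ 2 / 6 := by
  have pos : ∀ y : ℝ, 0 < y → |sinc y - 1| ≤ y ^ 2 / 6 := by
    intro y hy
    have hsin : y - y ^ 3 / 6 < sin y := sin_gt_sub_cube hy
    have hle : sinc y ≤ 1 := Real.sinc_le_one y
    have hge : 1 - y ^ 2 / 6 ≤ sinc y := by
      rw [sinc_eq_real_sinc, Real.sinc_of_ne_zero hy.ne', le_div_iff₀ hy]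
      nlinarith
    rw [abs_of_nonpos (by linarith)]
    linarith
  rcases lt_trichotomy x 0 with hx | rfl | hx
  · simpa [sinc_eq_real_sinc, Real.sinc_neg] using pos (-x) (neg_pos.2 hx)
  · simp [sinc]
  · exact pos x hx

theorem sinc_nat_succ_mul_pi (j : ℕ) : sinc ((j + 1 : ℝ) * π) = 0 := by
  rw [show (j + 1 : ℝ) * π = ((j + 1 : ℕ) : ℝ) * π by push_cast; ring, sinc_eq_real_sinc,
    Real.sinc_of_ne_zero (by positivity), sin_nat_mul_pi, zero_div]

theorem integral_cos_mul_centered {c : ℝ} (hc : c ≠ 0) (θ a : ℝ) :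
    ∫ t in (θ - a)..(θ + a), cos (c * t) = 2 * a * sinc (c * a) * cos (c * θ) := by
  have hsinc : a * sinc (c * a) = sin (c * a) / c := by
    by_cases ha : a = 0
    · simp [ha]
    · rw [sinc, if_neg (mul_ne_zero hc ha)]
      field_simp
  rw [intervalIntegral.integral_comp_mul_left cos hc, integral_cos, smul_eq_mul,
    mul_add, mul_sub c, sin_add, sin_sub, mul_assoc 2, hsinc]
  field_simp
  ring

noncomputable def trigKernel (b : ℕ → ℝ) (M : ℕ) (t : ℝ) : ℝ :=
  1 / (2 * π) + (1 / π) * ∑ j ∈ range M, b j * cos ((j + 1 : ℝ) * t)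

theorem continuous_trigKernel (b : ℕ → ℝ) (M : ℕ) : Continuous (trigKernel b M) := by
  unfold trigKernel
  fun_prop

theorem tendsto_trigKernel {ι : Type*} {l : Filter ι} {b : ι → ℕ → ℝ} {c : ℕ → ℝ}
    (hb : ∀ j, Tendsto (fun i => b i j) l (𝓝 (c j))) (M : ℕ) (t : ℝ) :
    Tendsto (fun i => trigKernel (b i) M t) l (𝓝 (trigKernel c M t)) :=
  tendsto_const_nhds.add <| (tendsto_finsetSum _ fun j _ => (hb j).mul_const _).const_mul _

theorem integral_trigKernel (b : ℕ → ℝ) (M : ℕ) (θ a : ℝ) :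
    ∫ t in (θ - a)..(θ + a), trigKernel b M t =
      2 * a * trigKernel (fun j => b j * sinc ((j + 1 : ℝ) * a)) M θ := by
  have hcos : ∀ j : ℕ, ∫ t in (θ - a)..(θ + a), b j * cos ((j + 1 : ℝ) * t) =
      2 * a * (b j * sinc ((j + 1 : ℝ) * a) * cos ((j + 1 : ℝ) * θ)) := by
    intro j
    rw [intervalIntegral.integral_const_mul, integral_cos_mul_centered (by positivity)]
    ring
  unfold trigKernel
  rw [intervalIntegral.integral_add intervalIntegrable_const
      (by apply Continuous.intervalIntegrable; fun_prop),
    intervalIntegral.integral_const, intervalIntegral.integral_const_mul,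
    intervalIntegral.integral_finsetSum fun j _ => by
      apply Continuous.intervalIntegrable; fun_prop]
  simp only [hcos, ← mul_sum, smul_eq_mul]
  ring

theorem integral_trigKernel_period (b : ℕ → ℝ) (M : ℕ) (θ : ℝ) :
    ∫ t in (θ - π)..(θ + π), trigKernel b M t = 1 := by
  rw [integral_trigKernel]
  simp only [trigKernel, sinc_nat_succ_mul_pi, mul_zero, zero_mul, sum_const_zero]
  field_simp
  ring

noncomputable def localAverage (a : ℝ) (f : ℝ → ℝ) (θ : ℝ) : ℝ :=
  (2 * a)⁻¹ * ∫ t in (θ - a)..(θ + a), f t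

theorem localAverage_trigKernel {a : ℝ} (ha : a ≠ 0) (b : ℕ → ℝ) (M : ℕ) (θ : ℝ) :
    localAverage a (trigKernel b M) θ =
      trigKernel (fun j => b j * sinc ((j + 1 : ℝ) * a)) M θ := by
  rw [localAverage, integral_trigKernel, ← mul_assoc, inv_mul_cancel₀ (by simpa using ha),
    one_mul]

theorem localAverage_nonneg {a : ℝ} (ha : 0 ≤ a) {f : ℝ → ℝ} (hf : ∀ t, 0 ≤ f t) (θ : ℝ) :
    0 ≤ localAverage a f θ :=
  mul_nonneg (by positivity) (intervalIntegral.integral_nonneg (by linarith) fun t _ => hf t)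

theorem localAverage_le {a : ℝ} (ha : 0 < a) {f : ℝ → ℝ} (hfc : Continuous f) {C : ℝ}
    (hf : ∀ t, f t ≤ C) (θ : ℝ) : localAverage a f θ ≤ C := by
  rw [localAverage, inv_mul_le_iff₀ (by positivity)]
  calc ∫ t in (θ - a)..(θ + a), f t ≤ ∫ _ in (θ - a)..(θ + a), C :=
        intervalIntegral.integral_mono_on (by linarith) (hfc.intervalIntegrable _ _)
          intervalIntegrable_const fun t _ => hf t
    _ = 2 * a * C := by rw [intervalIntegral.integral_const, smul_eq_mul]; ring

theorem localAverage_le_integral {a b : ℝ} (ha : 0 ≤ a) (hab : a ≤ b) {f : ℝ → ℝ}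
    (hfc : Continuous f) (hf : ∀ t, 0 ≤ f t) (θ : ℝ) :
    localAverage a f θ ≤ (2 * a)⁻¹ * ∫ t in (θ - b)..(θ + b), f t :=
  mul_le_mul_of_nonneg_left
    (intervalIntegral.integral_mono_interval (by linarith) (by linarith) (by linarith)
      (Eventually.of_forall hf) (hfc.intervalIntegrable _ _)) (by positivity)

noncomputable def fejerWeight (M j : ℕ) : ℝ := (M - (j + 1)) / M

theorem sum_cos_sq_add_sum_sin_sq (M : ℕ) (θ : ℝ) :
    (∑ j ∈ range M, cos (j * θ)) ^ 2 + (∑ j ∈ range M, sin (j * θ)) ^ 2 =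
      M + 2 * ∑ j ∈ range M, (M - (j + 1)) * cos ((j + 1 : ℝ) * θ) := by
  induction M with
  | zero => simp
  | succ M ih =>
    have hcross : (∑ j ∈ range M, cos (j * θ)) * cos (M * θ) +
        (∑ j ∈ range M, sin (j * θ)) * sin (M * θ) = ∑ j ∈ range M, cos ((j + 1 : ℝ) * θ) := by
      rw [sum_mul, sum_mul, ← sum_add_distrib,
        ← sum_range_reflect (fun j : ℕ => cos ((j + 1 : ℝ) * θ))]
      refine sum_congr rfl fun j hj => ?_
      have hcast : ((M - 1 - j : ℕ) : ℝ) = M - 1 - j := by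
        rw [Nat.sub_sub, Nat.cast_sub (by have := mem_range.1 hj; omega)]
        push_cast
        ring
      rw [hcast, ← cos_sub, ← cos_neg]
      ring_nf
    have hweights : ∑ j ∈ range (M + 1), ((M + 1 : ℕ) - (j + 1 : ℝ)) * cos ((j + 1 : ℝ) * θ) =
        ∑ j ∈ range M, (M - (j + 1 : ℝ)) * cos ((j + 1 : ℝ) * θ) +
          ∑ j ∈ range M, cos ((j + 1 : ℝ) * θ) := by
      rw [sum_range_succ, ← sum_add_distrib]
      push_cast
      simp only [sub_self, zero_mul, add_zero]
      exact sum_congr rfl fun j _ => by ring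
    rw [sum_range_succ, sum_range_succ, hweights]
    push_cast
    nlinarith [sin_sq_add_cos_sq (M * θ)]

theorem trigKernel_fejerWeight_nonneg (M : ℕ) (θ : ℝ) : 0 ≤ trigKernel (fejerWeight M) M θ := by
  rcases M.eq_zero_or_pos with rfl | hM
  · simp only [trigKernel, range_zero, sum_empty, mul_zero, add_zero]
    positivity
  have hM' : (0 : ℝ) < M := by exact_mod_cast hM
  have hscaled : 2 * π * M * trigKernel (fejerWeight M) M θ =
      (∑ j ∈ range M, cos (j * θ)) ^ 2 + (∑ j ∈ range M, sin (j * θ)) ^ 2 := by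
    rw [sum_cos_sq_add_sum_sin_sq, trigKernel, mul_add, ← mul_assoc, mul_sum, mul_sum]
    congr 1
    · field_simp
    · refine sum_congr rfl fun j _ => ?_
      rw [fejerWeight]
      field_simp
  have : 0 ≤ 2 * π * M * trigKernel (fejerWeight M) M θ := by rw [hscaled]; positivity
  exact (mul_nonneg_iff_of_pos_left (by positivity)).1 this

theorem multipliable_sinc_div_two_pow (x : ℝ) (k : ℕ) :
    Multipliable fun n : ℕ => sinc (x / 2 ^ (n + k)) := by
  have hbound : ∀ n : ℕ, ‖sinc (x / 2 ^ (n + k)) - 1‖ ≤ x ^ 2 / 6 * (1 / 4) ^ n := fun n =>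
    calc ‖sinc (x / 2 ^ (n + k)) - 1‖ ≤ (x / 2 ^ (n + k)) ^ 2 / 6 := abs_sinc_sub_one_le _
      _ = x ^ 2 / 6 * (1 / 4) ^ (n + k) := by
        rw [div_pow, ← pow_mul, pow_mul', one_div_pow]; norm_num; field_simp
      _ ≤ x ^ 2 / 6 * (1 / 4) ^ n := mul_le_mul_of_nonneg_left
        (pow_le_pow_of_le_one (by norm_num) (by norm_num) (Nat.le_add_right n k)) (by positivity)
  have hsum : Summable fun n : ℕ => sinc (x / 2 ^ (n + k)) - 1 :=
    .of_norm_bounded ((summable_geometric_of_lt_one (by norm_num) (by norm_num)).mul_left _) hbound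
  simpa using Real.multipliable_one_add_of_summable hsum

theorem abs_tprod_sinc_div_two_pow_le {x : ℝ} (hx : x ≠ 0) :
    |∏' n : ℕ, sinc (x / 2 ^ (n + 1))| ≤ 8 / x ^ 2 := by
  have hhead : |∏ n ∈ range 2, sinc (x / 2 ^ (n + 1))| ≤ 8 / x ^ 2 :=
    calc |∏ n ∈ range 2, sinc (x / 2 ^ (n + 1))|
        = |sinc (x / 2)| * |sinc (x / 4)| := by norm_num [prod_range_succ, abs_mul]
      _ ≤ |x / 2|⁻¹ * |x / 4|⁻¹ :=
          mul_le_mul (abs_sinc_le_inv_abs (by positivity)) (abs_sinc_le_inv_abs (by positivity))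
            (abs_nonneg _) (by positivity)
      _ = 8 / x ^ 2 := by rw [abs_div, abs_div, ← sq_abs x]; norm_num [-sq_abs]; field_simp; ring
  have htail : HasProd (fun n : ℕ => sinc (x / 2 ^ (n + 2 + 1)))
      (∏' n : ℕ, sinc (x / 2 ^ (n + 3))) := (multipliable_sinc_div_two_pow x 3).hasProd
  have htail_le : |∏' n : ℕ, sinc (x / 2 ^ (n + 3))| ≤ 1 :=
    le_of_tendsto' htail.abs.tendsto_prod_nat fun N =>
      prod_le_one (fun _ _ => abs_nonneg _) fun _ _ => Real.abs_sinc_le_one _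
  rw [(HasProd.prod_range_mul (f := fun n : ℕ => sinc (x / 2 ^ (n + 1))) htail).tprod_eq,
    abs_mul]
  calc |∏ n ∈ range 2, sinc (x / 2 ^ (n + 1))| * |∏' n : ℕ, sinc (x / 2 ^ (n + 3))|
      ≤ 8 / x ^ 2 * 1 := mul_le_mul hhead htail_le (abs_nonneg _) (by positivity)
    _ = 8 / x ^ 2 := mul_one _

theorem summable_abs_infKernelCoeff {ε : ℝ} (hε : ε ≠ 0) :
    Summable fun j : ℕ => |infKernelCoeff ε (j + 1)| := by
  have hbound : ∀ j : ℕ, |infKernelCoeff ε (j + 1)| ≤ 8 / ε ^ 2 * (1 / ((j + 1 : ℕ) : ℝ) ^ 2) :=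
    fun j => by
      calc |infKernelCoeff ε (j + 1)| ≤ 8 / (((j + 1 : ℕ) : ℝ) * ε) ^ 2 :=
            abs_tprod_sinc_div_two_pow_le (by positivity)
        _ = 8 / ε ^ 2 * (1 / ((j + 1 : ℕ) : ℝ) ^ 2) := by field_simp
  refine .of_nonneg_of_le (fun j => abs_nonneg _) hbound (.mul_left _ ?_)
  exact (summable_nat_add_iff 1).2 (Real.summable_one_div_nat_pow.2 one_lt_two)

noncomputable def scaledKernelCoeff (ε : ℝ) (N k : ℕ) : ℝ :=
  ∏ n ∈ range N, sinc (k * ε / 2 ^ (n + 1))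

theorem tendsto_scaledKernelCoeff (ε : ℝ) (k : ℕ) :
    Tendsto (fun N => scaledKernelCoeff ε N k) atTop (𝓝 (infKernelCoeff ε k)) :=
  (multipliable_sinc_div_two_pow _ 1).hasProd.tendsto_prod_nat

noncomputable def fejerSmoothed (ε : ℝ) (M N : ℕ) : ℝ → ℝ :=
  trigKernel (fun j => fejerWeight M j * scaledKernelCoeff ε N (j + 1)) M

theorem fejerSmoothed_succ {ε : ℝ} (hε : ε ≠ 0) (M N : ℕ) :
    fejerSmoothed ε M (N + 1) = localAverage (ε / 2 ^ (N + 1)) (fejerSmoothed ε M N) := by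
  funext θ
  rw [fejerSmoothed, fejerSmoothed, localAverage_trigKernel (by positivity)]
  congr 1
  funext j
  simp only [scaledKernelCoeff, prod_range_succ, Nat.cast_add, Nat.cast_one, mul_div_assoc,
    mul_assoc]

theorem fejerSmoothed_nonneg {ε : ℝ} (hε : 0 < ε) (M N : ℕ) (θ : ℝ) :
    0 ≤ fejerSmoothed ε M N θ := by
  induction N generalizing θ with
  | zero => simpa [fejerSmoothed, scaledKernelCoeff] using trigKernel_fejerWeight_nonneg M θ
  | succ N ih =>
    rw [fejerSmoothed_succ hε.ne']
    exact localAverage_nonneg (by positivity) ih θ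

theorem fejerSmoothed_le {ε : ℝ} (hε : 0 < ε) (hε2π : ε ≤ 2 * π) (M N : ℕ) (θ : ℝ) :
    fejerSmoothed ε M (N + 1) θ ≤ 1 / ε := by
  induction N generalizing θ with
  | zero =>
    rw [fejerSmoothed_succ hε.ne']
    calc _ ≤ (2 * (ε / 2 ^ (0 + 1)))⁻¹ * ∫ t in (θ - π)..(θ + π), fejerSmoothed ε M 0 t :=
          localAverage_le_integral (by positivity) (by linarith) (continuous_trigKernel _ _)
            (fejerSmoothed_nonneg hε M 0) θ
      _ = 1 / ε := by rw [fejerSmoothed, integral_trigKernel_period]; norm_num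
  | succ N ih =>
    rw [fejerSmoothed_succ hε.ne']
    exact localAverage_le (by positivity) (continuous_trigKernel _ _) ih θ

noncomputable def infKernelFejerMean (ε : ℝ) (M : ℕ) : ℝ → ℝ :=
  trigKernel (fun j => fejerWeight M j * infKernelCoeff ε (j + 1)) M

theorem infKernelFejerMean_mem_Icc {ε : ℝ} (hε : 0 < ε) (hε2π : ε ≤ 2 * π) (M : ℕ) (θ : ℝ) :
    infKernelFejerMean ε M θ ∈ Set.Icc 0 (1 / ε) := by
  have h : Tendsto (fun N => fejerSmoothed ε M (N + 1) θ) atTop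
      (𝓝 (infKernelFejerMean ε M θ)) :=
    (tendsto_trigKernel (fun j => (tendsto_scaledKernelCoeff ε (j + 1)).const_mul _) M θ).comp
      (tendsto_add_atTop_nat 1)
  exact isClosed_Icc.mem_of_tendsto h (Eventually.of_forall fun N =>
    ⟨fejerSmoothed_nonneg hε M _ θ, fejerSmoothed_le hε hε2π M N θ⟩)

theorem sum_range_sum_range (a : ℕ → ℝ) (M : ℕ) :
    ∑ m ∈ range M, ∑ j ∈ range m, a j = ∑ j ∈ range M, (M - (j + 1) : ℝ) * a j := by
  induction M with
  | zero => simp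
  | succ M ih =>
    rw [sum_range_succ, ih, sum_range_succ _ M, ← sum_add_distrib]
    push_cast
    simp only [sub_self, zero_mul, add_zero]
    exact sum_congr rfl fun j _ => by ring

theorem sum_range_fejerWeight_mul (a : ℕ → ℝ) (M : ℕ) :
    ∑ j ∈ range M, fejerWeight M j * a j = (M : ℝ)⁻¹ * ∑ m ∈ range M, ∑ j ∈ range m, a j := by
  rw [sum_range_sum_range, mul_sum]
  exact sum_congr rfl fun j _ => by rw [fejerWeight]; ring

theorem tendsto_sum_fejerWeight_mul {a : ℕ → ℝ} {s : ℝ} (h : HasSum a s) :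
    Tendsto (fun M => ∑ j ∈ range M, fejerWeight M j * a j) atTop (𝓝 s) := by
  simpa only [sum_range_fejerWeight_mul] using h.tendsto_sum_nat.cesaro

theorem tendsto_infKernelFejerMean {ε : ℝ} (hε : ε ≠ 0) (θ : ℝ) :
    Tendsto (fun M => infKernelFejerMean ε M θ) atTop (𝓝 (infKernel ε θ)) := by
  have hsum : Summable fun j : ℕ => infKernelCoeff ε (j + 1) * cos ((j + 1 : ℝ) * θ) :=
    .of_norm_bounded (summable_abs_infKernelCoeff hε) fun j => by
      rw [Real.norm_eq_abs, abs_mul]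
      exact mul_le_of_le_one_right (abs_nonneg _) (abs_cos_le_one _)
  have h := ((tendsto_sum_fejerWeight_mul hsum.hasSum).const_mul (1 / π)).const_add (1 / (2 * π))
  simpa only [infKernelFejerMean, infKernel, trigKernel, mul_assoc] using h

/-- For `0 < ε < π`, the infinite-order scaled kernel satisfies the bounds
`0 ≤ K̄_ε(θ) ≤ 1/ε` for every real `θ`. -/
theorem stmt_13 (ε : ℝ) (hε : 0 < ε) (hεπ : ε < Real.pi) (θ : ℝ) :
    0 ≤ infKernel ε θ ∧ infKernel ε θ ≤ 1 / ε :=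
  isClosed_Icc.mem_of_tendsto (tendsto_infKernelFejerMean hε.ne' θ)
    (Eventually.of_forall fun M => infKernelFejerMean_mem_Icc hε (by linarith [pi_pos]) M θ)
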